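/- arXiv:1010.0784 — 6 statements merged into one kernel-verified Lean document; each statement's English description precedes it below -/
import Mathlib

section
/- Let R = h/g be a real rational function with coprime numerator h of degree r and denominator g of degree m (both with positive leading coefficients), and let n = r + m. Then all leading principal minors Δ_j(R) of the infinite Hurwitz matrix of the Laurent coefficients of R at infinity vanish for j > n, regardless of whether R is Hurwitz. -/
open Polynomial Finset

/-- Coefficient sequence "from the top": for a polynomial regarded as having
degree `d`, `coeffFrom p d k` is the coefficient of `z^(d-k)` (zero for `k > d`). -/
noncomputable def coeffFrom (p : Polynomial ℝ) (d k : ℕ) : ℝ :=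
  if k ≤ d then p.coeff (d - k) else 0

/-- Coefficients `a_0, a_1, ..., a_n` of a polynomial, from the leading one down,
extended by zero. -/
noncomputable def coeffSeq (p : Polynomial ℝ) : ℕ → ℝ :=
  coeffFrom p p.natDegree

/-- The `j`-th leading principal minor of the infinite Hurwitz matrix built from the
sequence `t_0, t_1, t_2, ...`: rows alternate `(t_1, t_3, t_5, ...)` and
`(t_0, t_2, t_4, ...)`, each pair of rows shifted one column right. -/
noncomputable def hurwitzMinor (t : ℕ → ℝ) (j : ℕ) : ℝ :=
  (Matrix.of fun i k : Fin j =>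
    if (i : ℕ) ≤ 2 * (k : ℕ) + 1 then t (2 * (k : ℕ) + 1 - (i : ℕ)) else 0).det

/-- A real polynomial is Hurwitz stable if all its complex roots lie in the open
left half-plane. -/
def HurwitzStable (p : Polynomial ℝ) : Prop :=
  ∀ z : ℂ, Polynomial.aeval z p = 0 → z.re < 0

/-- `t` is the sequence of Laurent coefficients at infinity of the rational function
`h/g`, where `h` is regarded as having degree `r` and `g` degree `m`:
`h/g = t_0 z^(r-m) + t_1 z^(r-m-1) + ...`, i.e. `b_k = ∑_{i≤k} c_{k-i} t_i`. -/
def IsLaurentSeqOf (t : ℕ → ℝ) (h g : Polynomial ℝ) (r m : ℕ) : Prop :=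
  ∀ k, coeffFrom h r k = ∑ i ∈ Finset.range (k + 1), coeffFrom g m (k - i) * t i

/-- The determinant `Ω_{2j}(h,g)` of the `2j × 2j` matrix interleaving shifted copies
of the coefficient rows `(c_0, c_1, ...)` of `g` and `(b_0, b_1, ...)` of `h`:
(1-indexed) row `2i-1` carries `c_0, c_1, ...` starting in column `2i-1`, and row `2i`
carries `b_0, b_1, ...` starting in column `i`. Here `b = coeffSeq h`, `c = coeffSeq g`
(zero beyond the degree). -/
noncomputable def omegaDet (h g : Polynomial ℝ) (j : ℕ) : ℝ :=
  (Matrix.of fun u v : Fin (2 * j) =>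
    if (u : ℕ) % 2 = 0 then
      (if (u : ℕ) ≤ (v : ℕ) then coeffSeq g ((v : ℕ) - (u : ℕ)) else 0)
    else
      (if (u : ℕ) / 2 ≤ (v : ℕ) then coeffSeq h ((v : ℕ) - (u : ℕ) / 2) else 0)).det

/-- The leading principal minors `Δ_j(R)` of the infinite Hurwitz matrix of a rational
function `R = h/g` of order `n = r + m` vanish for all `j > n`. -/
theorem hurwitz_minors_vanish (h g : Polynomial ℝ) (r m : ℕ) (t : ℕ → ℝ)
    (hr : h.natDegree = r) (hm : g.natDegree = m)
    (hb0 : 0 < h.leadingCoeff) (hc0 : 0 < g.leadingCoeff)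
    (hcop : IsCoprime h g) (ht : IsLaurentSeqOf t h g r m) :
    ∀ j, r + m < j → hurwitzMinor t j = 0 := by
  classical
  intro j hj
  set M : Matrix (Fin j) (Fin j) ℝ :=
    Matrix.of (fun i k : Fin j =>
      if (i : ℕ) ≤ 2 * (k : ℕ) + 1 then t (2 * (k : ℕ) + 1 - (i : ℕ)) else 0) with hMdef
  show M.det = 0
  set Mrow : ℕ → Fin j → ℝ := fun i k =>
    if i ≤ 2 * (k : ℕ) + 1 then t (2 * (k : ℕ) + 1 - i) else 0 with hMrow
  set Brow : ℕ → Fin j → ℝ := fun i k =>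
    if i ≤ 2 * (k : ℕ) + 1 then coeffFrom h r (2 * (k : ℕ) + 1 - i) else 0 with hBrow
  have hMr : ∀ i : Fin j, M i = Mrow (i : ℕ) := fun i => rfl
  -- basic facts about the coefficient sequence of `g`
  have hcg : coeffSeq g = coeffFrom g m := by rw [coeffSeq, hm]
  have hc0ne : coeffSeq g 0 ≠ 0 := by
    have h0 : coeffSeq g 0 = g.leadingCoeff := by
      rw [coeffSeq, coeffFrom, if_pos (Nat.zero_le _), Nat.sub_zero]
      rfl
    rw [h0]; exact ne_of_gt hc0
  have hcm : ∀ s, m < s → coeffSeq g s = 0 := by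
    intro s hs
    rw [hcg, coeffFrom, if_neg (by omega)]
  -- the key convolution identity
  have key : ∀ (i kk : ℕ),
      (∑ s ∈ Finset.range (m + 1), coeffSeq g s *
        (if i + s ≤ 2 * kk + 1 then t (2 * kk + 1 - (i + s)) else 0)) =
      (if i ≤ 2 * kk + 1 then coeffFrom h r (2 * kk + 1 - i) else 0) := by
    intro i kk
    by_cases hik : i ≤ 2 * kk + 1
    · rw [if_pos hik]
      set k' := 2 * kk + 1 - i with hk'
      have hterm : ∀ s, (if i + s ≤ 2 * kk + 1 then t (2 * kk + 1 - (i + s)) else 0)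
          = (if s ≤ k' then t (k' - s) else 0) := by
        intro s
        by_cases hs : s ≤ k'
        · rw [if_pos hs, if_pos (by omega)]
          congr 1; omega
        · rw [if_neg hs, if_neg (by omega)]
      simp only [hterm]
      have hext1 : (∑ s ∈ Finset.range (m + 1),
          coeffSeq g s * (if s ≤ k' then t (k' - s) else 0))
          = ∑ s ∈ Finset.range (m + k' + 2),
            coeffSeq g s * (if s ≤ k' then t (k' - s) else 0) := by
        apply Finset.sum_subset
        · intro x hx; simp only [Finset.mem_range] at *; omega
        · intro x hx hx'
          simp only [Finset.mem_range] at hx hx'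
          rw [hcm x (by omega), zero_mul]
      rw [hext1]
      have hext2 : coeffFrom h r k' = ∑ s ∈ Finset.range (m + k' + 2),
          coeffSeq g s * (if s ≤ k' then t (k' - s) else 0) := by
        rw [ht k', ← Finset.sum_range_reflect]
        have hcongr : ∀ s ∈ Finset.range (k' + 1),
            coeffFrom g m (k' - (k' + 1 - 1 - s)) * t (k' + 1 - 1 - s)
            = coeffSeq g s * (if s ≤ k' then t (k' - s) else 0) := by
          intro s hs
          simp only [Finset.mem_range] at hs
          rw [hcg, if_pos (by omega)]
          congr 2 <;> omega
        rw [Finset.sum_congr rfl hcongr]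
        apply Finset.sum_subset
        · intro x hx; simp only [Finset.mem_range] at *; omega
        · intro x hx hx'
          simp only [Finset.mem_range] at hx hx'
          rw [if_neg (by omega), mul_zero]
      rw [← hext2]
    · rw [if_neg hik]
      apply Finset.sum_eq_zero
      intro s hs
      rw [if_neg (by omega), mul_zero]
  have hmj : m < j := by omega
  set K := (j - m + r) / 2 with hK
  have hKm : K + m < j := by omega
  -- spanning family: `K` coordinate vectors plus the last `m` rows
  set f : (Fin K ⊕ Fin m) → (Fin j → ℝ) :=
    Sum.elim (fun k => Pi.single (⟨(k : ℕ), by omega⟩ : Fin j) (1 : ℝ))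
             (fun s => Mrow (j - m + (s : ℕ))) with hf
  set W := Submodule.span ℝ (Set.range f) with hW
  -- support bound for the `h`-rows
  have hsupp : ∀ i : ℕ, i < j - m → ∀ k : Fin j, K ≤ (k : ℕ) → Brow i k = 0 := by
    intro i hi k hk
    rw [hBrow]
    by_cases hik : i ≤ 2 * (k : ℕ) + 1
    · simp only []
      rw [if_pos hik, coeffFrom, if_neg (by omega)]
    · simp only []
      rw [if_neg hik]
  -- the row recurrence
  have hrow : ∀ i : ℕ,
      coeffSeq g 0 • Mrow i =
      Brow i - ∑ s ∈ Finset.range m, coeffSeq g (s + 1) • Mrow (i + (s + 1)) := by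
    intro i
    funext k
    have hk := key i (k : ℕ)
    rw [Finset.sum_range_succ'] at hk
    simp only [add_zero] at hk
    simp only [Pi.sub_apply, Pi.smul_apply, Finset.sum_apply, smul_eq_mul, hMrow, hBrow]
    rw [← hk]
    ring
  -- every row lies in `W`
  have hmem : ∀ (d i : ℕ), i < j → j ≤ i + d → Mrow i ∈ W := by
    intro d
    induction d with
    | zero => intro i hij hi; exact absurd hi (by omega)
    | succ d ih =>
      intro i hij hi
      by_cases hcase : j - m ≤ i
      · have hfi : Mrow i = f (Sum.inr ⟨i - (j - m), by omega⟩) := by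
          rw [hf]
          show Mrow i = Mrow (j - m + (i - (j - m)))
          have harg : j - m + (i - (j - m)) = i := by omega
          rw [harg]
        rw [hfi]
        exact Submodule.subset_span (Set.mem_range_self _)
      · have hij' : i < j - m := by omega
        have hMi : Mrow i = (coeffSeq g 0)⁻¹ •
            (Brow i - ∑ s ∈ Finset.range m, coeffSeq g (s + 1) • Mrow (i + (s + 1))) := by
          rw [← hrow i, inv_smul_smul₀ hc0ne]
        rw [hMi]
        apply Submodule.smul_mem
        apply Submodule.sub_mem
        · have hBexp : Brow i = ∑ k : Fin j, Brow i k • (Pi.single k (1 : ℝ) : Fin j → ℝ) := by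
            funext x
            simp [Finset.sum_apply, Pi.single_apply]
          rw [hBexp]
          apply Submodule.sum_mem
          intro k _
          by_cases hk : K ≤ (k : ℕ)
          · rw [hsupp i hij' k hk, zero_smul]
            exact Submodule.zero_mem _
          · apply Submodule.smul_mem
            have hsingle : (Pi.single k (1 : ℝ) : Fin j → ℝ) = f (Sum.inl ⟨(k : ℕ), by omega⟩) := by
              simp only [hf, Sum.elim_inl, Fin.eta]
            rw [hsingle]
            exact Submodule.subset_span (Set.mem_range_self _)
        · apply Submodule.sum_mem
          intro s hs
          simp only [Finset.mem_range] at hs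
          apply Submodule.smul_mem
          exact ih (i + (s + 1)) (by omega) (by omega)
  -- conclude by a dimension count
  by_contra hdet
  have hunit : IsUnit M := (Matrix.isUnit_iff_isUnit_det M).mpr (isUnit_iff_ne_zero.mpr hdet)
  have hli : LinearIndependent ℝ (fun i => M i) :=
    Matrix.linearIndependent_rows_iff_isUnit.mpr hunit
  have hmemW : ∀ i : Fin j, M i ∈ W := by
    intro i
    rw [hMr i]
    exact hmem j (i : ℕ) i.isLt (by omega)
  have hli' : LinearIndependent ℝ (fun i : Fin j => (⟨M i, hmemW i⟩ : W)) :=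
    LinearIndependent.of_comp W.subtype hli
  have hfd : FiniteDimensional ℝ W := FiniteDimensional.span_of_finite ℝ (Set.finite_range f)
  have h1 : Fintype.card (Fin j) ≤ Module.finrank ℝ W := hli'.fintype_card_le_finrank
  have h2 : Module.finrank ℝ W ≤ K + m := by
    refine (finrank_span_le_card (Set.range f)).trans ?_
    have hcard := Fintype.card_range_le f
    simp only [Fintype.card_sum, Fintype.card_fin] at hcard
    rw [Set.toFinset_card]
    exact hcard
  simp only [Fintype.card_fin] at h1
  omega
end

section
/- Let h(z) = b_0 z^r + ... + b_r and g(z) = c_0 z^m + ... + c_m be real polynomials with b_0, c_0 > 0, let R = h/g, and let P(z) = (-1)^m h(z) g(-z) = a_0 z^n + ... + a_n where n = r + m. Then the Hurwitz determinants satisfy Δ_j(P) = c_0^{2j} Δ_j(R) for all j = 1, 2, .... -/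
open Polynomial Finset

private lemma coeffFrom_eq_reflect (p : Polynomial ℝ) (d : ℕ) (hd : p.natDegree ≤ d) (k : ℕ) :
    coeffFrom p d k = (p.reflect d).coeff k := by
  rw [coeff_reflect, coeffFrom]
  split_ifs with hk
  · rw [revAt_le hk]
  · rw [revAt_eq_self_of_lt (by omega)]
    exact (coeff_eq_zero_of_natDegree_lt (by omega)).symm

private lemma coeff_comp_neg_X (g : Polynomial ℝ) (w : ℕ) :
    (g.comp (-X)).coeff w = (-1 : ℝ) ^ w * g.coeff w := by
  induction g using Polynomial.induction_on' with
  | add p q hp hq => simp [add_comp, hp, hq, mul_add]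
  | monomial n a =>
    rw [monomial_comp, neg_pow]
    have : ((-1 : ℝ[X]) ^ n) = C ((-1:ℝ)^n) := by simp
    rw [this]
    simp only [coeff_C_mul, coeff_X_pow, coeff_monomial]
    rcases eq_or_ne n w with rfl | hne
    · simp; ring
    · simp [hne, Ne.symm hne]

private lemma sum_range_even_odd {M : Type*} [AddCommMonoid M] (K : ℕ) (f : ℕ → M) :
    ∑ x ∈ Finset.range (2 * K), f x
      = ∑ y ∈ Finset.range K, (f (2 * y) + f (2 * y + 1)) := by
  induction K with
  | zero => simp
  | succ n ih =>
    rw [Finset.sum_range_succ, ← ih, Nat.mul_succ,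
      show 2 * n + 2 = (2 * n + 1) + 1 from rfl, Finset.sum_range_succ, Finset.sum_range_succ,
      add_assoc]

private lemma d_odd (c : ℕ → ℝ) (u : ℕ) :
    ∑ l ∈ Finset.range (2 * u + 1 + 1), (-1 : ℝ) ^ l * c l * c (2 * u + 1 - l) = 0 := by
  have H := Finset.sum_range_reflect
    (fun l => (-1 : ℝ) ^ l * c l * c (2 * u + 1 - l)) (2 * u + 1 + 1)
  have key : ∀ l ∈ Finset.range (2 * u + 1 + 1),
      (-1:ℝ) ^ (2 * u + 1 + 1 - 1 - l) * c (2 * u + 1 + 1 - 1 - l)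
          * c (2 * u + 1 - (2 * u + 1 + 1 - 1 - l))
        = -((-1:ℝ) ^ l * c l * c (2 * u + 1 - l)) := by
    intro l hl
    rw [Finset.mem_range] at hl
    have h1 : 2 * u + 1 + 1 - 1 - l = 2 * u + 1 - l := by omega
    have h2 : 2 * u + 1 - (2 * u + 1 - l) = l := by omega
    rw [h1, h2]
    have hs : (-1:ℝ) ^ (2 * u + 1 - l) = -(-1:ℝ) ^ l := by
      rcases Nat.even_or_odd l with he | ho
      · have : Odd (2 * u + 1 - l) := by
          rcases he with ⟨v, rfl⟩; exact ⟨u - v, by omega⟩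
        rw [this.neg_one_pow, he.neg_one_pow]
      · have : Even (2 * u + 1 - l) := by
          rcases ho with ⟨v, rfl⟩; exact ⟨u - v, by omega⟩
        rw [this.neg_one_pow, ho.neg_one_pow]; simp
    rw [hs]; ring
  rw [Finset.sum_congr rfl key, Finset.sum_neg_distrib] at H
  linarith

private lemma coeffP (h g : Polynomial ℝ) (r m : ℕ)
    (hr : h.natDegree = r) (hm : g.natDegree = m) (k : ℕ) :
    coeffFrom (Polynomial.C ((-1 : ℝ) ^ m) * h * g.comp (-Polynomial.X)) (r + m) k
      = ∑ l ∈ Finset.range (k + 1),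
          (-1 : ℝ) ^ l * coeffFrom g m l * coeffFrom h r (k - l) := by
  have hq : (g.comp (-X)).natDegree ≤ m := by
    calc (g.comp (-X)).natDegree ≤ g.natDegree * (-X : ℝ[X]).natDegree := natDegree_comp_le
    _ ≤ m := by simp [hm]
  have hCh : (Polynomial.C ((-1 : ℝ) ^ m) * h).natDegree ≤ r :=
    le_trans (natDegree_C_mul_le _ _) (le_of_eq hr)
  have hP : (Polynomial.C ((-1 : ℝ) ^ m) * h * g.comp (-Polynomial.X)).natDegree ≤ r + m :=
    le_trans (natDegree_mul_le) (add_le_add hCh hq)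
  rw [coeffFrom_eq_reflect _ _ hP,
    reflect_mul _ _ hCh hq, reflect_C_mul, coeff_mul,
    Finset.Nat.sum_antidiagonal_eq_sum_range_succ_mk]
  -- coeff of reflect m (g.comp (-X))
  have hB : ∀ e, (reflect m (g.comp (-X))).coeff e = (-1:ℝ)^(m+e) * coeffFrom g m e := by
    intro e
    rw [coeff_reflect, coeffFrom]
    split_ifs with he
    · rw [revAt_le he, coeff_comp_neg_X,
        show m + e = (m - e) + 2 * e from by omega, pow_add, pow_mul]
      simp
    · rw [revAt_eq_self_of_lt (by omega), coeff_comp_neg_X,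
        coeff_eq_zero_of_natDegree_lt (by omega), mul_zero, mul_zero]
  have hA : ∀ l, (Polynomial.C ((-1 : ℝ) ^ m) * reflect r h).coeff l
      = (-1:ℝ)^m * coeffFrom h r l := by
    intro l
    rw [coeff_C_mul, coeffFrom_eq_reflect h r (le_of_eq hr)]
  -- now rewrite the sum and reflect it
  rw [show (∑ l ∈ Finset.range (k + 1),
        (Polynomial.C ((-1 : ℝ) ^ m) * reflect r h).coeff l
          * (reflect m (g.comp (-X))).coeff (k - l))
      = ∑ l ∈ Finset.range (k + 1),
          (-1:ℝ)^(k-l) * coeffFrom g m (k-l) * coeffFrom h r l from by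
    refine Finset.sum_congr rfl fun l hl => ?_
    rw [hA, hB, pow_add]
    have hmm : (-1:ℝ)^m * (-1:ℝ)^m = 1 := by
      rw [← pow_add, ← two_mul, pow_mul]; simp
    linear_combination (coeffFrom h r l * coeffFrom g m (k - l) * (-1:ℝ)^(k-l)) * hmm]
  rw [← Finset.sum_range_reflect]
  refine Finset.sum_congr rfl fun l hl => ?_
  rw [Finset.mem_range] at hl
  have h1 : k + 1 - 1 - l = k - l := by omega
  have h2 : k - (k - l) = l := by omega
  rw [h1, h2]

private lemma triangle_swap (k : ℕ) (F : ℕ → ℕ → ℝ) :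
    ∑ l ∈ Finset.range (k + 1), ∑ i ∈ Finset.range (k - l + 1), F l i
      = ∑ i ∈ Finset.range (k + 1), ∑ l ∈ Finset.range (k - i + 1), F l i := by
  have h1 : ∀ l, l ∈ Finset.range (k + 1) →
      ∑ i ∈ Finset.range (k - l + 1), F l i
        = ∑ i ∈ Finset.range (k + 1), if l + i ≤ k then F l i else 0 := by
    intro l hl
    rw [Finset.mem_range] at hl
    rw [← Finset.sum_subset (Finset.range_subset_range.2 (show k - l + 1 ≤ k + 1 by omega))
      (fun x _ hx => by rw [Finset.mem_range] at hx; rw [if_neg (by omega)])]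
    exact Finset.sum_congr rfl fun i hi => by
      rw [Finset.mem_range] at hi; rw [if_pos (by omega)]
  have h2 : ∀ i, i ∈ Finset.range (k + 1) →
      ∑ l ∈ Finset.range (k - i + 1), F l i
        = ∑ l ∈ Finset.range (k + 1), if l + i ≤ k then F l i else 0 := by
    intro i hi
    rw [Finset.mem_range] at hi
    rw [← Finset.sum_subset (Finset.range_subset_range.2 (show k - i + 1 ≤ k + 1 by omega))
      (fun x _ hx => by rw [Finset.mem_range] at hx; rw [if_neg (by omega)])]
    exact Finset.sum_congr rfl fun l hl => by
      rw [Finset.mem_range] at hl; rw [if_pos (by omega)]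
  rw [Finset.sum_congr rfl h1, Finset.sum_congr rfl h2, Finset.sum_comm]

private lemma a_eq_dt (h g : Polynomial ℝ) (r m : ℕ) (t : ℕ → ℝ)
    (hr : h.natDegree = r) (hm : g.natDegree = m)
    (ht : IsLaurentSeqOf t h g r m) (k : ℕ) :
    coeffFrom (Polynomial.C ((-1 : ℝ) ^ m) * h * g.comp (-Polynomial.X)) (r + m) k
      = ∑ s ∈ Finset.range (k + 1),
          (∑ l ∈ Finset.range (k - s + 1),
            (-1 : ℝ) ^ l * coeffFrom g m l * coeffFrom g m (k - s - l)) * t s := by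
  rw [coeffP h g r m hr hm k]
  have : ∀ l ∈ Finset.range (k + 1),
      (-1 : ℝ) ^ l * coeffFrom g m l * coeffFrom h r (k - l)
        = ∑ i ∈ Finset.range (k - l + 1),
            (-1 : ℝ) ^ l * coeffFrom g m l * (coeffFrom g m (k - l - i) * t i) := by
    intro l hl
    rw [ht (k - l), Finset.mul_sum]
  rw [Finset.sum_congr rfl this, triangle_swap]
  refine Finset.sum_congr rfl fun s hs => ?_
  rw [Finset.sum_mul]
  refine Finset.sum_congr rfl fun l hl => ?_
  rw [show k - l - s = k - s - l from by omega]
  ring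


/-- For `P(z) = (-1)^m h(z) g(-z)` of degree `n = r + m`, the Hurwitz determinants
satisfy `Δ_j(P) = c_0^{2j} Δ_j(R)`, where `R = h/g` has Laurent coefficients `t`. -/
theorem hurwitz_dets_P_eq_R (h g : Polynomial ℝ) (r m : ℕ) (t : ℕ → ℝ)
    (hr : h.natDegree = r) (hm : g.natDegree = m)
    (hb0 : 0 < h.leadingCoeff) (hc0 : 0 < g.leadingCoeff)
    (ht : IsLaurentSeqOf t h g r m) :
    ∀ j, 1 ≤ j →
      hurwitzMinor (coeffFrom (Polynomial.C ((-1 : ℝ) ^ m) * h * g.comp (-Polynomial.X)) (r + m)) j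
        = g.leadingCoeff ^ (2 * j) * hurwitzMinor t j := by
  intro j hj
  classical
  set cc : ℕ → ℝ := coeffFrom g m with hcc
  set dseq : ℕ → ℝ := fun u => ∑ l ∈ Finset.range (u + 1), (-1:ℝ)^l * cc l * cc (u - l)
    with hdseq
  set aP : ℕ → ℝ :=
    coeffFrom (Polynomial.C ((-1 : ℝ) ^ m) * h * g.comp (-Polynomial.X)) (r + m) with haP
  have ha : ∀ K, aP K = ∑ s ∈ Finset.range (K + 1), dseq (K - s) * t s := by
    intro K
    rw [haP, a_eq_dt h g r m t hr hm ht K]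
  set N : Matrix (Fin j) (Fin j) ℝ := Matrix.of fun i k : Fin j =>
    if (i : ℕ) ≤ 2 * (k : ℕ) + 1 then t (2 * (k : ℕ) + 1 - (i : ℕ)) else 0 with hN
  set U : Matrix (Fin j) (Fin j) ℝ := Matrix.of fun k' k : Fin j =>
    if (k' : ℕ) ≤ (k : ℕ) then dseq (2 * ((k : ℕ) - (k' : ℕ))) else 0 with hU
  have hM : (Matrix.of fun i k : Fin j =>
      if (i : ℕ) ≤ 2 * (k : ℕ) + 1 then aP (2 * (k : ℕ) + 1 - (i : ℕ)) else 0) = N * U := by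
    ext i k
    rw [Matrix.mul_apply]
    simp only [Matrix.of_apply, hN, hU]
    rw [Fin.sum_univ_eq_sum_range (fun k' =>
      (if (i:ℕ) ≤ 2 * k' + 1 then t (2 * k' + 1 - (i:ℕ)) else 0) *
      (if k' ≤ (k:ℕ) then dseq (2 * ((k:ℕ) - k')) else 0))]
    rw [← Finset.sum_subset (Finset.range_subset_range.2 (show (k:ℕ) + 1 ≤ j from k.isLt))
      (fun x _ hx => by
        rw [Finset.mem_range] at hx
        rw [if_neg (show ¬ x ≤ (k:ℕ) by omega), mul_zero])]
    by_cases hik : (i : ℕ) ≤ 2 * (k : ℕ) + 1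
    · rw [if_pos hik, ha]
      -- reindex s ↦ s + i
      have e1 : ∑ s ∈ Finset.range (2 * (k:ℕ) + 1 - (i:ℕ) + 1), dseq (2*(k:ℕ)+1-(i:ℕ) - s) * t s
          = ∑ s' ∈ Finset.range (2 * ((k:ℕ) + 1)),
              (if (i:ℕ) ≤ s' then dseq (2*(k:ℕ)+1 - s') * t (s' - (i:ℕ)) else 0) := by
        symm
        rw [Finset.range_eq_Ico,
          ← Finset.sum_Ico_consecutive _ (show 0 ≤ (i:ℕ) by omega)
            (show (i:ℕ) ≤ 2 * ((k:ℕ) + 1) by omega),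
          Finset.sum_eq_zero (fun x hx => by
            rw [Finset.mem_Ico] at hx
            rw [if_neg (by omega)]), zero_add,
          Finset.sum_Ico_eq_sum_range,
          show 2 * ((k:ℕ) + 1) - (i:ℕ) = 2*(k:ℕ)+1-(i:ℕ) + 1 from by omega]
        refine Finset.sum_congr (by rw [Finset.range_eq_Ico]) fun s hs => ?_
        rw [Finset.mem_range] at hs
        rw [if_pos (by omega), show (i:ℕ) + s - (i:ℕ) = s from by omega,
          show 2*(k:ℕ)+1 - ((i:ℕ) + s) = 2*(k:ℕ)+1-(i:ℕ) - s from by omega]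
      rw [e1, show 2 * ((k:ℕ) + 1) = 2 * ((k:ℕ)+1) from rfl,
        sum_range_even_odd ((k:ℕ)+1)]
      refine Finset.sum_congr rfl fun y hy => ?_
      rw [Finset.mem_range] at hy
      have hzero : dseq (2 * (k:ℕ) + 1 - 2 * y) = 0 := by
        rw [show 2*(k:ℕ)+1 - 2*y = 2*((k:ℕ)-y)+1 from by omega, hdseq]
        exact d_odd cc ((k:ℕ) - y)
      rw [hzero, if_pos (show y ≤ (k:ℕ) by omega),
        show 2*(k:ℕ)+1 - (2*y+1) = 2*((k:ℕ)-y) from by omega]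
      split_ifs with h1 h2 h2 <;> ring
    · rw [if_neg hik]
      refine (Finset.sum_eq_zero fun x hx => ?_).symm
      rw [Finset.mem_range] at hx
      rw [if_neg (show ¬ (i:ℕ) ≤ 2 * x + 1 by omega), zero_mul]
  have hUdet : U.det = (g.leadingCoeff ^ 2) ^ j := by
    have htri : U.BlockTriangular id := by
      intro k' k hlt
      exact if_neg (by exact Nat.not_le.2 hlt)
    rw [Matrix.det_of_upperTriangular htri]
    have hd0' : dseq 0 = g.leadingCoeff ^ 2 := by
      rw [hdseq]
      simp only [zero_add, Finset.sum_range_one, pow_zero, one_mul, Nat.sub_zero]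
      have : cc 0 = g.leadingCoeff := by
        rw [hcc, coeffFrom, if_pos (Nat.zero_le m), Nat.sub_zero, ← hm, coeff_natDegree]
      rw [this, sq]
    have : ∀ k : Fin j, U k k = dseq 0 := by
      intro k
      show (if (k:ℕ) ≤ (k:ℕ) then dseq (2 * ((k:ℕ) - (k:ℕ))) else 0) = dseq 0
      rw [if_pos le_rfl, Nat.sub_self, Nat.mul_zero]
    rw [Finset.prod_congr rfl (fun k _ => this k), Finset.prod_const, hd0',
      Finset.card_univ, Fintype.card_fin]
  rw [hurwitzMinor, hurwitzMinor, hM, Matrix.det_mul, hUdet, pow_mul]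
  ring
end

section
/- Let h(z) = b_0 z^r + ... + b_r and g(z) = c_0 z^m + ... + c_m be real polynomials with b_0, c_0 > 0 and R = h/g with Laurent coefficients t_0, t_1, ... at infinity. For each j ≥ 1, the 2j×2j determinant Ω_{2j}(h,g), formed from the coefficients b_i, c_i as an interleaved resultant-type matrix, satisfies Ω_{2j}(h,g) = c_0^{2j} Δ_j(R). -/
open Polynomial Finset

def interleaveFun (j : ℕ) (x : Fin j ⊕ Fin j) : Fin (2 * j) :=
  match x with
  | .inl a => ⟨2 * (a : ℕ), by omega⟩
  | .inr a => ⟨2 * (a : ℕ) + 1, by omega⟩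

def interleaveInv (j : ℕ) (v : Fin (2 * j)) : Fin j ⊕ Fin j :=
  if (v : ℕ) % 2 = 0 then .inl ⟨(v : ℕ) / 2, by omega⟩ else .inr ⟨(v : ℕ) / 2, by omega⟩

/-- Interleaving equivalence `Fin j ⊕ Fin j ≃ Fin (2*j)`: `inl a ↦ 2a`, `inr a ↦ 2a+1`. -/
def interleave (j : ℕ) : Fin j ⊕ Fin j ≃ Fin (2 * j) where
  toFun := interleaveFun j
  invFun := interleaveInv j
  left_inv := by
    rintro (a | a)
    · rw [show interleaveFun j (Sum.inl a) = ⟨2 * (a : ℕ), by omega⟩ from rfl,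
        interleaveInv, if_pos (show 2 * (a : ℕ) % 2 = 0 by omega)]
      exact congrArg Sum.inl (Fin.ext (show 2 * (a : ℕ) / 2 = (a : ℕ) by omega))
    · rw [show interleaveFun j (Sum.inr a) = ⟨2 * (a : ℕ) + 1, by omega⟩ from rfl,
        interleaveInv, if_neg (show ¬ (2 * (a : ℕ) + 1) % 2 = 0 by omega)]
      exact congrArg Sum.inr (Fin.ext (show (2 * (a : ℕ) + 1) / 2 = (a : ℕ) by omega))
  right_inv := by
    intro v
    by_cases hv : (v : ℕ) % 2 = 0
    · rw [interleaveInv, if_pos hv]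
      exact Fin.ext (show 2 * ((v : ℕ) / 2) = (v : ℕ) by omega)
    · rw [interleaveInv, if_neg hv]
      exact Fin.ext (show 2 * ((v : ℕ) / 2) + 1 = (v : ℕ) by omega)

lemma conv_sum (t c : ℕ → ℝ) (a v n : ℕ) (ha : a ≤ v) (hv : v < n) :
    ∑ s ∈ Finset.range n, (if a ≤ s then t (s - a) else 0) * (if s ≤ v then c (v - s) else 0)
      = ∑ i ∈ Finset.range (v - a + 1), c (v - a - i) * t i := by
  have h1 : ∀ s ∈ Finset.range n,
      (if a ≤ s then t (s - a) else 0) * (if s ≤ v then c (v - s) else 0)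
        = if s ∈ Finset.Icc a v then t (s - a) * c (v - s) else 0 := by
    intro s _
    by_cases h1 : a ≤ s <;> by_cases h2 : s ≤ v <;>
      simp [h1, h2, Finset.mem_Icc]
  have hsub : Finset.Icc a v ⊆ Finset.range n := by
    intro s hs
    simp only [Finset.mem_Icc] at hs
    simp only [Finset.mem_range]
    omega
  rw [Finset.sum_congr rfl h1, Finset.sum_ite_mem, Finset.inter_eq_right.mpr hsub]
  rw [show Finset.Icc a v = Finset.Ico a (v + 1) by rw [Finset.Ico_add_one_right_eq_Icc],
    Finset.sum_Ico_eq_sum_range]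
  apply Finset.sum_congr (by congr 1; omega)
  intro i hi
  simp only [Finset.mem_range] at hi
  rw [mul_comm]
  congr 1 <;> congr 1 <;> omega


/-- `Ω_{2j}(h,g) = c_0^{2j} Δ_j(R)` for every `j ≥ 1`, where `Δ_j(R)` is the `j×j`
leading principal minor of the infinite Hurwitz matrix of the Laurent coefficients `t`
of `R = h/g` at infinity. -/
theorem omega_eq_c0_pow_hurwitzMinor (h g : Polynomial ℝ) (r m : ℕ) (t : ℕ → ℝ)
    (hr : h.natDegree = r) (hm : g.natDegree = m)
    (hb0 : 0 < h.leadingCoeff) (hc0 : 0 < g.leadingCoeff)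
    (ht : IsLaurentSeqOf t h g r m) :
    ∀ j, 1 ≤ j → omegaDet h g j = g.leadingCoeff ^ (2 * j) * hurwitzMinor t j := by
  intro j _
  have hcs : coeffSeq g = coeffFrom g m := by rw [coeffSeq, hm]
  have hhs : coeffSeq h = coeffFrom h r := by rw [coeffSeq, hr]
  set A : Matrix (Fin (2 * j)) (Fin (2 * j)) ℝ := Matrix.of fun u s =>
    if (u : ℕ) % 2 = 0 then (if (s : ℕ) = (u : ℕ) then 1 else 0)
    else (if (u : ℕ) / 2 ≤ (s : ℕ) then t ((s : ℕ) - (u : ℕ) / 2) else 0) with hA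
  set C : Matrix (Fin (2 * j)) (Fin (2 * j)) ℝ := Matrix.of fun s v =>
    if (s : ℕ) ≤ (v : ℕ) then coeffSeq g ((v : ℕ) - (s : ℕ)) else 0 with hC
  -- the Omega matrix factors
  have hfac : (Matrix.of fun u v : Fin (2 * j) =>
      if (u : ℕ) % 2 = 0 then
        (if (u : ℕ) ≤ (v : ℕ) then coeffSeq g ((v : ℕ) - (u : ℕ)) else 0)
      else
        (if (u : ℕ) / 2 ≤ (v : ℕ) then coeffSeq h ((v : ℕ) - (u : ℕ) / 2) else 0)) = A * C := by
    ext u v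
    rw [Matrix.mul_apply]
    by_cases hu : (u : ℕ) % 2 = 0
    · simp only [hA, hC, Matrix.of_apply, hu, if_true]
      rw [Finset.sum_eq_single u]
      · simp
      · intro s _ hs
        have hne : (s : ℕ) ≠ (u : ℕ) := fun e => hs (Fin.ext e)
        simp [hne]
      · simp
    · simp only [hA, hC, Matrix.of_apply, hu, if_false]
      set a := (u : ℕ) / 2 with hadef
      have hsum : ∑ s : Fin (2 * j), (if a ≤ (s : ℕ) then t ((s : ℕ) - a) else 0) *
          (if (s : ℕ) ≤ (v : ℕ) then coeffSeq g ((v : ℕ) - (s : ℕ)) else 0)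
          = ∑ s ∈ Finset.range (2 * j),
            (if a ≤ s then t (s - a) else 0) *
              (if s ≤ (v : ℕ) then coeffSeq g ((v : ℕ) - s) else 0) := by
        rw [Finset.sum_range fun s => (if a ≤ s then t (s - a) else 0) *
          (if s ≤ (v : ℕ) then coeffSeq g ((v : ℕ) - s) else 0)]
      rw [hsum]
      by_cases hav : a ≤ (v : ℕ)
      · rw [if_pos hav, conv_sum _ _ _ _ _ hav v.isLt, hhs, ht ((v : ℕ) - a)]
        exact Finset.sum_congr rfl fun i _ => by rw [hcs]
      · rw [if_neg hav]
        symm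
        apply Finset.sum_eq_zero
        intro s _
        rcases le_or_gt a s with h1 | h1
        · have h2 : ¬ (s ≤ (v : ℕ)) := by omega
          rw [if_neg h2, mul_zero]
        · rw [if_neg (not_le.mpr h1), zero_mul]
  -- determinant of C
  have hdetC : C.det = g.leadingCoeff ^ (2 * j) := by
    have htri : C.BlockTriangular id := by
      intro i k hik
      simp only [id] at hik
      simp only [hC, Matrix.of_apply]
      rw [if_neg (by exact_mod_cast not_le.mpr hik)]
    rw [Matrix.det_of_upperTriangular htri]
    have hdiag : ∀ i : Fin (2 * j), C i i = g.leadingCoeff := by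
      intro i
      simp only [hC, Matrix.of_apply, le_refl, if_true, Nat.sub_self, hcs, coeffFrom,
        Nat.zero_le, Nat.sub_zero]
      rw [Polynomial.leadingCoeff, hm]
    rw [Finset.prod_congr rfl fun i _ => hdiag i]
    simp
  -- determinant of A
  have hdetA : A.det = hurwitzMinor t j := by
    rw [← Matrix.det_submatrix_equiv_self (interleave j) A]
    have hblock : A.submatrix (interleave j) (interleave j) =
        Matrix.fromBlocks (1 : Matrix (Fin j) (Fin j) ℝ) 0
          (Matrix.of fun a k : Fin j =>
            if (a : ℕ) ≤ 2 * (k : ℕ) then t (2 * (k : ℕ) - (a : ℕ)) else 0)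
          (Matrix.of fun i k : Fin j =>
            if (i : ℕ) ≤ 2 * (k : ℕ) + 1 then t (2 * (k : ℕ) + 1 - (i : ℕ)) else 0) := by
      ext x y
      cases x with
      | inl a =>
        cases y with
        | inl k =>
          show (if 2 * (a : ℕ) % 2 = 0 then (if 2 * (k : ℕ) = 2 * (a : ℕ) then (1:ℝ) else 0)
              else (if 2 * (a : ℕ) / 2 ≤ 2 * (k : ℕ) then t (2 * (k : ℕ) - 2 * (a : ℕ) / 2) else 0))
            = (1 : Matrix (Fin j) (Fin j) ℝ) a k
          rw [if_pos (show 2 * (a : ℕ) % 2 = 0 by omega), Matrix.one_apply]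
          by_cases hak : a = k
          · subst hak
            rw [if_pos rfl, if_pos rfl]
          · rw [if_neg (show ¬ 2 * (k : ℕ) = 2 * (a : ℕ) from
                fun h2 => hak (Fin.ext (by omega))), if_neg hak]
        | inr k =>
          show (if 2 * (a : ℕ) % 2 = 0 then (if 2 * (k : ℕ) + 1 = 2 * (a : ℕ) then (1:ℝ) else 0)
              else (if 2 * (a : ℕ) / 2 ≤ 2 * (k : ℕ) + 1 then
                t (2 * (k : ℕ) + 1 - 2 * (a : ℕ) / 2) else 0))
            = (0 : Matrix (Fin j) (Fin j) ℝ) a k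
          rw [if_pos (show 2 * (a : ℕ) % 2 = 0 by omega),
            if_neg (show ¬ 2 * (k : ℕ) + 1 = 2 * (a : ℕ) by omega), Matrix.zero_apply]
      | inr a =>
        cases y with
        | inl k =>
          show (if (2 * (a : ℕ) + 1) % 2 = 0 then
                (if 2 * (k : ℕ) = 2 * (a : ℕ) + 1 then (1:ℝ) else 0)
              else (if (2 * (a : ℕ) + 1) / 2 ≤ 2 * (k : ℕ) then
                t (2 * (k : ℕ) - (2 * (a : ℕ) + 1) / 2) else 0))
            = if (a : ℕ) ≤ 2 * (k : ℕ) then t (2 * (k : ℕ) - (a : ℕ)) else 0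
          rw [if_neg (show ¬ (2 * (a : ℕ) + 1) % 2 = 0 by omega),
            show (2 * (a : ℕ) + 1) / 2 = (a : ℕ) by omega]
        | inr k =>
          show (if (2 * (a : ℕ) + 1) % 2 = 0 then
                (if 2 * (k : ℕ) + 1 = 2 * (a : ℕ) + 1 then (1:ℝ) else 0)
              else (if (2 * (a : ℕ) + 1) / 2 ≤ 2 * (k : ℕ) + 1 then
                t (2 * (k : ℕ) + 1 - (2 * (a : ℕ) + 1) / 2) else 0))
            = if (a : ℕ) ≤ 2 * (k : ℕ) + 1 then t (2 * (k : ℕ) + 1 - (a : ℕ)) else 0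
          rw [if_neg (show ¬ (2 * (a : ℕ) + 1) % 2 = 0 by omega),
            show (2 * (a : ℕ) + 1) / 2 = (a : ℕ) by omega]
    rw [hblock, Matrix.det_fromBlocks_zero₁₂, Matrix.det_one, one_mul, hurwitzMinor]
  rw [omegaDet, hfac, Matrix.det_mul, hdetA, hdetC, mul_comm]
end

section
/- Let p be a real polynomial of even degree n = 2l with positive leading coefficient a_0, even part p_0 and odd part p_1 (so p(z) = p_0(z^2) + z p_1(z^2)), and let Φ = p_1/p_0 with Laurent expansion Φ(u) = s_0/u + s_1/u^2 + ... at infinity. Then for j = 1, ..., l: Δ_{2j-1}(p) = a_0^{2j-1} D_j(Φ) and Δ_{2j}(p) = (-1)^j a_0^{2j} \widehat{D}_j(Φ), where D_j and \widehat{D}_j are the Hankel determinants of the sequences (s_0, s_1, s_2, ...) and (s_1, s_2, s_3, ...) respectively. -/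
open Polynomial Finset

namespace HHaux

open Equiv Equiv.Perm Finset

/-- The key permutation: `x ↦ 2x+1` while possible, then `x ↦ 2(N-1-x)`. -/
def rho (N : ℕ) : Equiv.Perm (Fin N) where
  toFun x := ⟨if 2 * (x : ℕ) + 1 < N then 2 * (x : ℕ) + 1 else 2 * (N - 1 - (x : ℕ)),
    by have := x.isLt; split_ifs <;> omega⟩
  invFun y := ⟨if (y : ℕ) % 2 = 1 then (y : ℕ) / 2 else N - 1 - (y : ℕ) / 2,
    by have := y.isLt; split_ifs <;> omega⟩
  left_inv x := by
    have := x.isLt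
    ext
    simp only
    split_ifs <;> omega
  right_inv y := by
    have := y.isLt
    ext
    simp only
    split_ifs <;> omega

lemma rho_val {N : ℕ} (x : Fin N) :
    ((rho N x : Fin N) : ℕ)
      = if 2 * (x : ℕ) + 1 < N then 2 * (x : ℕ) + 1 else 2 * (N - 1 - (x : ℕ)) := rfl

/-- Extend a permutation of `Fin N` to `Fin (N+1)` fixing the last element. -/
def EL {N : ℕ} (e : Equiv.Perm (Fin N)) : Equiv.Perm (Fin (N + 1)) :=
  finSuccEquivLast.symm.permCongr e.optionCongr

lemma EL_sign {N : ℕ} (e : Equiv.Perm (Fin N)) : Perm.sign (EL e) = Perm.sign e := by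
  rw [EL, Equiv.Perm.sign_permCongr, Equiv.optionCongr_sign]

lemma EL_castSucc {N : ℕ} (e : Equiv.Perm (Fin N)) (i : Fin N) :
    EL e i.castSucc = (e i).castSucc := by
  simp [EL, Equiv.permCongr_apply]

lemma EL_last {N : ℕ} (e : Equiv.Perm (Fin N)) : EL e (Fin.last N) = Fin.last N := by
  simp [EL, Equiv.permCongr_apply]

lemma EL_val {N : ℕ} (e : Equiv.Perm (Fin N)) (i : Fin (N + 1)) :
    ((EL e i : Fin (N + 1)) : ℕ)
      = if h : (i : ℕ) < N then ((e ⟨i, h⟩ : Fin N) : ℕ) else N := by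
  induction i using Fin.lastCases with
  | last => simp [EL_last]
  | cast i =>
      have h : ((i.castSucc : Fin (N+1)) : ℕ) < N := i.isLt
      rw [EL_castSucc, dif_pos h]
      simp

lemma rho_rec (N : ℕ) :
    rho (N + 2) = finRotate (N + 2) * Equiv.Perm.decomposeFin.symm (0, EL (rho N)) := by
  ext x
  induction x using Fin.cases with
  | zero =>
      rw [Equiv.Perm.mul_apply, Equiv.Perm.decomposeFin_symm_apply_zero]
      rw [rho_val]
      simp [finRotate_succ_apply]
  | succ i =>
      rw [Equiv.Perm.mul_apply, Equiv.Perm.decomposeFin_symm_apply_succ, Equiv.swap_self,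
        Equiv.refl_apply]
      rw [rho_val, coe_finRotate]
      have hv := EL_val (rho N) i
      rcases Nat.lt_or_ge (i : ℕ) N with h | h
      · rw [dif_pos h] at hv
        have hlt : ((rho N ⟨(i : ℕ), h⟩ : Fin N) : ℕ) < N := (rho N ⟨(i : ℕ), h⟩).isLt
        have hne : ((EL (rho N) i).succ) ≠ Fin.last (N + 1) := by
          rw [Ne, Fin.ext_iff, Fin.val_succ, hv, Fin.val_last]
          omega
        rw [if_neg hne, Fin.val_succ, Fin.val_succ, hv, rho_val]
        have := i.isLt
        simp only [Fin.val_mk] at *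
        split_ifs <;> omega
      · have hiN : (i : ℕ) = N := by have := i.isLt; omega
        rw [dif_neg (by omega)] at hv
        have heq : ((EL (rho N) i).succ) = Fin.last (N + 1) := by
          rw [Fin.ext_iff, Fin.val_succ, hv, Fin.val_last]
        rw [if_pos heq, Fin.val_succ]
        split_ifs <;> omega

lemma rho_zero : rho 0 = 1 := by
  ext x
  exact absurd x.isLt (by omega)

lemma rho_one : rho 1 = 1 := by
  ext x
  have := x.isLt
  rw [rho_val]
  split_ifs <;> omega

lemma sign_rho (N : ℕ) : Perm.sign (rho N) = if N % 4 = 2 then -1 else 1 := by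
  induction N using Nat.twoStepInduction with
  | zero => rw [rho_zero]; simp
  | one => rw [rho_one]; simp
  | more n ih _ =>
      rw [rho_rec, map_mul, sign_finRotate, Equiv.Perm.decomposeFin.symm_sign, EL_sign, ih]
      rcases (by omega : n % 4 = 0 ∨ n % 4 = 1 ∨ n % 4 = 2 ∨ n % 4 = 3) with h | h | h | h
      · rw [Odd.neg_one_pow (Nat.odd_iff.mpr (by omega))]
        rw [if_neg (by omega : ¬ n % 4 = 2), if_pos (by omega : (n+2) % 4 = 2)]
        simp
      · rw [Even.neg_one_pow (Nat.even_iff.mpr (by omega))]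
        rw [if_neg (by omega : ¬ n % 4 = 2), if_neg (by omega : ¬ (n+2) % 4 = 2)]
        simp
      · rw [Odd.neg_one_pow (Nat.odd_iff.mpr (by omega))]
        rw [if_pos (by omega : n % 4 = 2), if_neg (by omega : ¬ (n+2) % 4 = 2)]
        simp
      · rw [Even.neg_one_pow (Nat.even_iff.mpr (by omega))]
        rw [if_neg (by omega : ¬ n % 4 = 2), if_neg (by omega : ¬ (n+2) % 4 = 2)]
        simp

noncomputable section

/-- Row of `c`-coefficients shifted `t` to the right. -/
def Rrow (c : ℕ → ℝ) (t k : ℕ) : ℝ := if t ≤ k then c (k - t) else 0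

/-- Row of `b`-coefficients (starting from `b 1`) shifted `m` to the right. -/
def Brow (b : ℕ → ℝ) (m k : ℕ) : ℝ := if m ≤ k then b (k - m + 1) else 0

/-- Entries of the Hurwitz-type matrix. -/
def Hent (b c : ℕ → ℝ) (i k : ℕ) : ℝ :=
  if i % 2 = 0 then Brow b (i / 2) k else Rrow c (i / 2) k

/-- Entries of the row-operation matrix. -/
def Lent (s' : ℕ → ℝ) (i r : ℕ) : ℝ :=
  if i = r then 1
  else if i % 2 = 0 ∧ r % 2 = 1 ∧ i < r then -(s' (r / 2 - i / 2)) else 0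

/-- Entries after the row operations. -/
def H'ent (c s' : ℕ → ℝ) (q i k : ℕ) : ℝ :=
  if i % 2 = 0 then
    ∑ t ∈ Finset.range (k + 1), (if q ≤ t then s' (t - i / 2) * c (k - t) else 0)
  else Rrow c (i / 2) k

lemma sum_range_odd (G : ℕ → ℝ) (N : ℕ) :
    ∑ r ∈ Finset.range N, (if r % 2 = 1 then G (r / 2) else 0)
      = ∑ t ∈ Finset.range (N / 2), G t := by
  induction N with
  | zero => simp
  | succ n ih =>
      rw [Finset.sum_range_succ, ih]
      by_cases h : n % 2 = 1
      · rw [if_pos h, (by omega : (n + 1) / 2 = n / 2 + 1), Finset.sum_range_succ]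
      · rw [if_neg h, (by omega : (n + 1) / 2 = n / 2), add_zero]

lemma sum_shift (g : ℕ → ℝ) (m n : ℕ) :
    ∑ t ∈ Finset.range n, (if m ≤ t then g t else 0) = ∑ i ∈ Finset.range (n - m), g (m + i) := by
  induction n with
  | zero => simp
  | succ n ih =>
      rw [Finset.sum_range_succ, ih]
      by_cases h : m ≤ n
      · rw [if_pos h, (by omega : n + 1 - m = (n - m) + 1), Finset.sum_range_succ]
        congr 2
        omega
      · rw [if_neg h, (by omega : n + 1 - m = 0), (by omega : n - m = 0), add_zero]

lemma detL_one (s' : ℕ → ℝ) (N : ℕ) :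
    (Matrix.of fun i r : Fin N => Lent s' (i : ℕ) (r : ℕ)).det = 1 := by
  have hBT : (Matrix.of fun i r : Fin N => Lent s' (i : ℕ) (r : ℕ)).BlockTriangular id := by
    intro i r h
    have h' : (r : ℕ) < (i : ℕ) := h
    simp only [Matrix.of_apply, Lent]
    rw [if_neg (by omega), if_neg (by rintro ⟨-, -, h3⟩; omega)]
  rw [Matrix.det_of_upperTriangular hBT]
  apply Finset.prod_eq_one
  intro i _
  simp [Lent]

lemma sum_extend (f : ℕ → ℝ) (a n : ℕ) (h : a ≤ n) :
    ∑ t ∈ Finset.range a, f t = ∑ t ∈ Finset.range n, (if t < a then f t else 0) :=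
  calc ∑ t ∈ Finset.range a, f t
      = ∑ t ∈ Finset.range a, (if t < a then f t else 0) :=
        Finset.sum_congr rfl (fun t ht => by rw [if_pos (Finset.mem_range.mp ht)])
    _ = ∑ t ∈ Finset.range n, (if t < a then f t else 0) :=
        Finset.sum_subset (Finset.range_subset_range.mpr h)
          (fun x _ hnx => by rw [if_neg (by simpa using hnx)])

lemma detH_eq (b c s' : ℕ → ℝ) (q j N : ℕ) (hN : N = q + j) (hq2 : N / 2 = q) (hjq : j ≤ q + 1)
    (hbc : ∀ k, b (k + 1) = ∑ i ∈ Finset.range (k + 1), c (k - i) * s' i) :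
    (Matrix.of fun i k : Fin N => Hent b c (i : ℕ) (k : ℕ)).det
      = (Matrix.of fun i k : Fin N => H'ent c s' q (i : ℕ) (k : ℕ)).det := by
  have hmul : (Matrix.of fun i k : Fin N => H'ent c s' q (i : ℕ) (k : ℕ))
      = (Matrix.of fun i r : Fin N => Lent s' (i : ℕ) (r : ℕ))
        * (Matrix.of fun i k : Fin N => Hent b c (i : ℕ) (k : ℕ)) := by
    ext i k
    rw [Matrix.mul_apply]
    simp only [Matrix.of_apply]
    rw [show (∑ r : Fin N, Lent s' (i : ℕ) (r : ℕ) * Hent b c (r : ℕ) (k : ℕ))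
        = ∑ r ∈ Finset.range N, Lent s' (i : ℕ) r * Hent b c r (k : ℕ) from
      Fin.sum_univ_eq_sum_range (fun r => Lent s' (i : ℕ) r * Hent b c r (k : ℕ)) N]
    by_cases hi : (i : ℕ) % 2 = 0
    · -- even row
      set m := (i : ℕ) / 2 with hm
      have him : (i : ℕ) = 2 * m := by omega
      have hmq : m ≤ q := by have := i.isLt; omega
      have hpt : ∀ r : ℕ, Lent s' (i : ℕ) r * Hent b c r (k : ℕ)
          = (if r = (i : ℕ) then Brow b m (k : ℕ) else 0)
            + (if r % 2 = 1 then
                (if m ≤ r / 2 then -(s' (r / 2 - m) * Rrow c (r / 2) (k : ℕ)) else 0) else 0) := by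
        intro r
        rcases eq_or_ne ((i : ℕ)) r with h1 | h1
        · subst h1
          simp only [Lent, Hent, Brow, Rrow, if_pos rfl]
          split_ifs <;> first | ring1 | omega | (exfalso; omega)
        · simp only [Lent, Hent, Brow, Rrow]
          split_ifs <;> first | ring1 | omega | (exfalso; omega)
      rw [Finset.sum_congr rfl (fun r _ => hpt r), Finset.sum_add_distrib,
        Finset.sum_ite_eq' (Finset.range N) ((i : ℕ)) (fun _ => Brow b m (k : ℕ)),
        if_pos (Finset.mem_range.mpr i.isLt),
        sum_range_odd (fun t => if m ≤ t then -(s' (t - m) * Rrow c t (k : ℕ)) else 0) N, hq2]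
      have hBrow : Brow b m (k : ℕ)
          = ∑ t ∈ Finset.range ((k : ℕ) + 1),
              (if m ≤ t then s' (t - m) * c ((k : ℕ) - t) else 0) := by
        unfold Brow
        by_cases hmk : m ≤ (k : ℕ)
        · rw [if_pos hmk, hbc ((k : ℕ) - m),
            sum_shift (fun t => s' (t - m) * c ((k : ℕ) - t)) m ((k : ℕ) + 1),
            (by omega : (k : ℕ) + 1 - m = (k : ℕ) - m + 1)]
          refine Finset.sum_congr rfl (fun x hx => ?_)
          rw [(by omega : m + x - m = x), (by omega : (k : ℕ) - (m + x) = (k : ℕ) - m - x)]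
          ring
        · rw [if_neg hmk]
          symm
          apply Finset.sum_eq_zero
          intro t ht
          rw [if_neg (by have := Finset.mem_range.mp ht; omega)]
      rw [hBrow]
      unfold H'ent
      rw [if_pos hi]
      have hkN : (k : ℕ) + 1 ≤ N := k.isLt
      have hqN : q ≤ N := by omega
      rw [sum_extend (fun t => if m ≤ t then s' (t - m) * c ((k : ℕ) - t) else 0) ((k : ℕ) + 1) N hkN,
        sum_extend (fun t => if m ≤ t then -(s' (t - m) * Rrow c t (k : ℕ)) else 0) q N hqN,
        sum_extend (fun t => if q ≤ t then s' (t - m) * c ((k : ℕ) - t) else 0) ((k : ℕ) + 1) N hkN,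
        ← Finset.sum_add_distrib]
      refine Finset.sum_congr rfl (fun t _ => ?_)
      unfold Rrow
      split_ifs <;> first | ring1 | omega | (exfalso; omega)
    · -- odd row
      have hpt : ∀ r : ℕ, Lent s' (i : ℕ) r * Hent b c r (k : ℕ)
          = (if r = (i : ℕ) then Hent b c (i : ℕ) (k : ℕ) else 0) := by
        intro r
        rcases eq_or_ne ((i : ℕ)) r with h1 | h1
        · subst h1
          simp [Lent]
        · simp only [Lent]
          rw [if_neg h1, if_neg (by rintro ⟨h2, -, -⟩; omega), zero_mul, if_neg (by omega)]
      rw [Finset.sum_congr rfl (fun r _ => hpt r),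
        Finset.sum_ite_eq' (Finset.range N) ((i : ℕ)) (fun _ => Hent b c (i : ℕ) (k : ℕ)),
        if_pos (Finset.mem_range.mpr i.isLt)]
      unfold H'ent Hent
      rw [if_neg hi, if_neg hi]
  rw [hmul, Matrix.det_mul, detL_one, one_mul]

lemma detH'_eq (c s' : ℕ → ℝ) (q j N : ℕ) (hN : N = q + j) (hqj : q ≤ j) (hjq : j ≤ q + 1) :
    (Matrix.of fun i k : Fin N => H'ent c s' q (i : ℕ) (k : ℕ)).det
      = ((Equiv.Perm.sign (rho N) : ℤ) : ℝ) * c 0 ^ N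
        * (Matrix.of fun m u : Fin j => s' ((q + 1 - j) + (m : ℕ) + (u : ℕ))).det := by
  set A := (Matrix.of fun i k : Fin N => H'ent c s' q (i : ℕ) (k : ℕ)) with hA
  set f : Fin q ⊕ Fin j ≃ Fin N := finSumFinEquiv.trans (finCongr hN.symm) with hf
  have hfl : ∀ u : Fin q, ((f (Sum.inl u)) : ℕ) = (u : ℕ) := fun u => by simp [hf]
  have hfr : ∀ v : Fin j, ((f (Sum.inr v)) : ℕ) = q + (v : ℕ) := fun v => by simp [hf]
  have hrl : ∀ t : Fin q, ((rho N (f (Sum.inl t))) : ℕ) = 2 * (t : ℕ) + 1 := by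
    intro t
    rw [rho_val, hfl]
    have := t.isLt
    rw [if_pos (by omega)]
  have hrr : ∀ m : Fin j, ((rho N (f (Sum.inr m))) : ℕ) = 2 * (j - 1 - (m : ℕ)) := by
    intro m
    rw [rho_val, hfr]
    have := m.isLt
    rw [if_neg (by omega), (by omega : N - 1 - (q + (m : ℕ)) = j - 1 - (m : ℕ))]
  set T : Matrix (Fin q) (Fin q) ℝ := Matrix.of fun t u => Rrow c (t : ℕ) (u : ℕ) with hT
  set X : Matrix (Fin q) (Fin j) ℝ := Matrix.of fun t v => Rrow c (t : ℕ) (q + (v : ℕ)) with hX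
  set M : Matrix (Fin j) (Fin j) ℝ := Matrix.of fun m v =>
      ∑ t ∈ Finset.range (q + (v : ℕ) + 1),
        (if q ≤ t then s' (t - (j - 1 - (m : ℕ))) * c (q + (v : ℕ) - t) else 0) with hM
  have hK : A.submatrix (f.trans (rho N)) f = Matrix.fromBlocks T X 0 M := by
    ext a b
    rcases a with t | m <;> rcases b with u | v <;>
      simp only [Matrix.submatrix_apply, Equiv.trans_apply, Matrix.fromBlocks_apply₁₁,
        Matrix.fromBlocks_apply₁₂, Matrix.fromBlocks_apply₂₁, Matrix.fromBlocks_apply₂₂,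
        hA, hT, hX, hM, Matrix.of_apply, Matrix.zero_apply]
    · rw [show H'ent c s' q ((rho N (f (Sum.inl t))) : ℕ) ((f (Sum.inl u)) : ℕ)
          = H'ent c s' q (2 * (t : ℕ) + 1) (u : ℕ) by rw [hrl, hfl]]
      unfold H'ent
      rw [if_neg (by omega), (by omega : (2 * (t : ℕ) + 1) / 2 = (t : ℕ))]
    · rw [show H'ent c s' q ((rho N (f (Sum.inl t))) : ℕ) ((f (Sum.inr v)) : ℕ)
          = H'ent c s' q (2 * (t : ℕ) + 1) (q + (v : ℕ)) by rw [hrl, hfr]]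
      unfold H'ent
      rw [if_neg (by omega), (by omega : (2 * (t : ℕ) + 1) / 2 = (t : ℕ))]
    · rw [show H'ent c s' q ((rho N (f (Sum.inr m))) : ℕ) ((f (Sum.inl u)) : ℕ)
          = H'ent c s' q (2 * (j - 1 - (m : ℕ))) (u : ℕ) by rw [hrr, hfl]]
      unfold H'ent
      rw [if_pos (by omega)]
      apply Finset.sum_eq_zero
      intro t ht
      have h1 := Finset.mem_range.mp ht
      have h2 := u.isLt
      rw [if_neg (by omega)]
    · rw [show H'ent c s' q ((rho N (f (Sum.inr m))) : ℕ) ((f (Sum.inr v)) : ℕ)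
          = H'ent c s' q (2 * (j - 1 - (m : ℕ))) (q + (v : ℕ)) by rw [hrr, hfr]]
      unfold H'ent
      rw [if_pos (by omega), (by omega : 2 * (j - 1 - (m : ℕ)) / 2 = j - 1 - (m : ℕ))]
  have h1 : (A.submatrix (f.trans (rho N)) f).det
      = ((Equiv.Perm.sign (rho N) : ℤ) : ℝ) * A.det := by
    have h2 : A.submatrix (f.trans (rho N)) f
        = (A.submatrix f f).submatrix (f.symm.permCongr (rho N)) id := by
      ext a b
      simp [Equiv.permCongr_apply]
    rw [h2, Matrix.det_permute, Matrix.det_submatrix_equiv_self, Equiv.Perm.sign_permCongr]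
  -- determinant of T
  have hdetT : T.det = c 0 ^ q := by
    have hBT : T.BlockTriangular id := by
      intro t u h
      have h' : (u : ℕ) < (t : ℕ) := h
      simp only [hT, Matrix.of_apply, Rrow]
      rw [if_neg (by omega)]
    rw [Matrix.det_of_upperTriangular hBT]
    have : ∀ t : Fin q, T t t = c 0 := by
      intro t
      simp only [hT, Matrix.of_apply, Rrow]
      rw [if_pos le_rfl, Nat.sub_self]
    calc ∏ t : Fin q, (Matrix.diag T) t = ∏ t : Fin q, c 0 :=
          Finset.prod_congr rfl (fun t _ => this t)
      _ = c 0 ^ q := by rw [Finset.prod_const, Finset.card_univ, Fintype.card_fin]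
  set S : Matrix (Fin j) (Fin j) ℝ :=
    Matrix.of (fun m u : Fin j => s' ((q + 1 - j) + (m : ℕ) + (u : ℕ))) with hS
  set C : Matrix (Fin j) (Fin j) ℝ :=
    Matrix.of (fun u v : Fin j => if (u : ℕ) ≤ (v : ℕ) then c ((v : ℕ) - (u : ℕ)) else 0) with hC
  have hdetC : C.det = c 0 ^ j := by
    have hBT : C.BlockTriangular id := by
      intro u v h
      have h' : (v : ℕ) < (u : ℕ) := h
      simp only [hC, Matrix.of_apply]
      rw [if_neg (by omega)]
    rw [Matrix.det_of_upperTriangular hBT]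
    have : ∀ t : Fin j, C t t = c 0 := by
      intro t
      simp only [hC, Matrix.of_apply]
      rw [if_pos le_rfl, Nat.sub_self]
    calc ∏ t : Fin j, (Matrix.diag C) t = ∏ t : Fin j, c 0 :=
          Finset.prod_congr rfl (fun t _ => this t)
      _ = c 0 ^ j := by rw [Finset.prod_const, Finset.card_univ, Fintype.card_fin]
  have hMSC : M = S * C := by
    ext m v
    rw [Matrix.mul_apply]
    have hL : M m v = ∑ u ∈ Finset.range ((v : ℕ) + 1),
        s' (q + u - (j - 1 - (m : ℕ))) * c (q + (v : ℕ) - (q + u)) := by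
      simp only [hM, Matrix.of_apply]
      rw [sum_shift (fun t => s' (t - (j - 1 - (m : ℕ))) * c (q + (v : ℕ) - t)) q (q + (v : ℕ) + 1),
        (by omega : q + (v : ℕ) + 1 - q = (v : ℕ) + 1)]
    rw [hL]
    have hR : (∑ u : Fin j, S m u * C u v) = ∑ u ∈ Finset.range j,
        (if u < (v : ℕ) + 1 then s' ((q + 1 - j) + (m : ℕ) + u) * c ((v : ℕ) - u) else 0) := by
      simp only [hS, hC, Matrix.of_apply]
      rw [Fin.sum_univ_eq_sum_range (fun u : ℕ =>
        s' ((q + 1 - j) + (m : ℕ) + u) * (if u ≤ (v : ℕ) then c ((v : ℕ) - u) else 0)) j]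
      refine Finset.sum_congr rfl (fun u _ => ?_)
      rw [mul_ite, mul_zero]
      exact if_congr Nat.lt_succ_iff.symm rfl rfl
    rw [hR, ← sum_extend (fun u => s' ((q + 1 - j) + (m : ℕ) + u) * c ((v : ℕ) - u))
      ((v : ℕ) + 1) j (by have := v.isLt; omega)]
    refine Finset.sum_congr rfl (fun u hu => ?_)
    have hum := Finset.mem_range.mp hu
    have hm := m.isLt
    rw [(by omega : q + u - (j - 1 - (m : ℕ)) = (q + 1 - j) + (m : ℕ) + u),
      (by omega : q + (v : ℕ) - (q + u) = (v : ℕ) - u)]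
  have hsgn : ((Equiv.Perm.sign (rho N) : ℤ) : ℝ) * ((Equiv.Perm.sign (rho N) : ℤ) : ℝ) = 1 := by
    rcases Int.units_eq_one_or (Equiv.Perm.sign (rho N)) with h | h <;> rw [h] <;> norm_num
  calc A.det = ((Equiv.Perm.sign (rho N) : ℤ) : ℝ)
        * (((Equiv.Perm.sign (rho N) : ℤ) : ℝ) * A.det) := by rw [← mul_assoc, hsgn, one_mul]
    _ = ((Equiv.Perm.sign (rho N) : ℤ) : ℝ) * (A.submatrix (f.trans (rho N)) f).det := by rw [h1]
    _ = ((Equiv.Perm.sign (rho N) : ℤ) : ℝ) * (T.det * M.det) := by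
        rw [hK, Matrix.det_fromBlocks_zero₂₁]
    _ = ((Equiv.Perm.sign (rho N) : ℤ) : ℝ) * c 0 ^ N * S.det := by
        rw [hdetT, hMSC, Matrix.det_mul, hdetC, hN]
        ring

lemma core_det (b c s' : ℕ → ℝ) (q j N : ℕ) (hN : N = q + j) (hq2 : N / 2 = q)
    (hqj : q ≤ j) (hjq : j ≤ q + 1)
    (hbc : ∀ k, b (k + 1) = ∑ i ∈ Finset.range (k + 1), c (k - i) * s' i) :
    (Matrix.of fun i k : Fin N => Hent b c (i : ℕ) (k : ℕ)).det
      = ((Equiv.Perm.sign (rho N) : ℤ) : ℝ) * c 0 ^ N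
        * (Matrix.of fun m u : Fin j => s' ((q + 1 - j) + (m : ℕ) + (u : ℕ))).det := by
  rw [detH_eq b c s' q j N hN hq2 hjq hbc, detH'_eq c s' q j N hN hqj hjq]

/-- The `b` and `c` coefficient sequences extracted from `p`. -/
def bfun (p : Polynomial ℝ) (l t : ℕ) : ℝ :=
  if t = 0 then 0 else coeffFrom p (2 * l) (2 * t - 1)

def cfun (p : Polynomial ℝ) (l t : ℕ) : ℝ := coeffFrom p (2 * l) (2 * t)

lemma hurwitzMinor_eq_detH (p : Polynomial ℝ) (l : ℕ) (hdeg : p.natDegree = 2 * l) (N : ℕ) :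
    hurwitzMinor (coeffSeq p) N
      = (Matrix.of fun i k : Fin N => Hent (bfun p l) (cfun p l) (i : ℕ) (k : ℕ)).det := by
  have ha : coeffSeq p = coeffFrom p (2 * l) := by
    unfold coeffSeq
    rw [hdeg]
  unfold hurwitzMinor
  congr 1
  ext i k
  simp only [Matrix.of_apply]
  rw [ha]
  by_cases hi : (i : ℕ) % 2 = 0
  · unfold Hent Brow bfun
    rw [if_pos hi]
    split_ifs with h1 h2 h3
    · exact h3.elim
    · rw [show 2 * (k : ℕ) + 1 - (i : ℕ) = 2 * ((k : ℕ) - (i : ℕ) / 2 + 1) - 1 by omega]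
    · exfalso; omega
    · rfl
    · exfalso; omega
    · rfl
  · unfold Hent Rrow cfun
    rw [if_neg hi]
    split_ifs with h1 h2
    · rw [show 2 * (k : ℕ) + 1 - (i : ℕ) = 2 * ((k : ℕ) - (i : ℕ) / 2) by omega]
    · exfalso; omega
    · exfalso; omega
    · rfl


end
end HHaux

/-- For a polynomial `p` of even degree `n = 2l` with positive leading coefficient,
even part `p0` and odd part `p1`, and `Φ = p1/p0` with Laurent coefficients
`s_0, s_1, ...` at infinity: `Δ_{2j-1}(p) = a_0^{2j-1} D_j(Φ)` and
`Δ_{2j}(p) = (-1)^j a_0^{2j} D̂_j(Φ)` for `j = 1, ..., l`, where `D_j`, `D̂_j` are the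
Hankel determinants of `(s_0, s_1, ...)` and `(s_1, s_2, ...)`. -/
theorem hurwitz_hankel_even (p p0 p1 : Polynomial ℝ) (l : ℕ) (s : ℕ → ℝ)
    (hl : 1 ≤ l) (hdeg : p.natDegree = 2 * l) (ha0 : 0 < p.leadingCoeff)
    (hp0 : ∀ k, p0.coeff k = p.coeff (2 * k))
    (hp1 : ∀ k, p1.coeff k = p.coeff (2 * k + 1))
    (hs : ∀ k, coeffFrom p1 l (k + 1)
      = ∑ i ∈ Finset.range (k + 1), coeffFrom p0 l (k - i) * s i) :
    ∀ j, 1 ≤ j → j ≤ l →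
      hurwitzMinor (coeffSeq p) (2 * j - 1)
          = p.leadingCoeff ^ (2 * j - 1)
            * (Matrix.of fun i k : Fin j => s ((i : ℕ) + (k : ℕ))).det ∧
      hurwitzMinor (coeffSeq p) (2 * j)
          = (-1 : ℝ) ^ j * p.leadingCoeff ^ (2 * j)
            * (Matrix.of fun i k : Fin j => s ((i : ℕ) + (k : ℕ) + 1)).det := by
  intro j hj1 _
  have hc : ∀ t, coeffFrom p0 l t = HHaux.cfun p l t := by
    intro t
    unfold HHaux.cfun coeffFrom
    by_cases ht : t ≤ l
    · rw [if_pos ht, if_pos (by omega : 2 * t ≤ 2 * l), hp0 (l - t),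
        show 2 * (l - t) = 2 * l - 2 * t by omega]
    · rw [if_neg ht, if_neg (by omega : ¬ 2 * t ≤ 2 * l)]
  have hb : ∀ k, coeffFrom p1 l (k + 1) = HHaux.bfun p l (k + 1) := by
    intro k
    unfold HHaux.bfun coeffFrom
    rw [if_neg (Nat.succ_ne_zero k)]
    by_cases hk : k + 1 ≤ l
    · rw [if_pos hk, if_pos (by omega : 2 * (k + 1) - 1 ≤ 2 * l), hp1 (l - (k + 1)),
        show 2 * (l - (k + 1)) + 1 = 2 * l - (2 * (k + 1) - 1) by omega]
    · rw [if_neg hk, if_neg (by omega : ¬ 2 * (k + 1) - 1 ≤ 2 * l)]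
  have hbc : ∀ k, HHaux.bfun p l (k + 1)
      = ∑ i ∈ Finset.range (k + 1), HHaux.cfun p l (k - i) * s i := by
    intro k
    rw [← hb k, hs k]
    exact Finset.sum_congr rfl (fun i _ => by rw [hc])
  have hc0 : HHaux.cfun p l 0 = p.leadingCoeff := by
    unfold HHaux.cfun coeffFrom
    rw [if_pos (by omega : 2 * 0 ≤ 2 * l), show 2 * l - 2 * 0 = 2 * l by omega, ← hdeg,
      Polynomial.coeff_natDegree]
  constructor
  · rw [HHaux.hurwitzMinor_eq_detH p l hdeg (2 * j - 1),
      HHaux.core_det (HHaux.bfun p l) (HHaux.cfun p l) s (j - 1) j (2 * j - 1)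
        (by omega) (by omega) (by omega) (by omega) hbc, hc0]
    have hs1 : ((Equiv.Perm.sign (HHaux.rho (2 * j - 1)) : ℤ) : ℝ) = 1 := by
      rw [HHaux.sign_rho, if_neg (by omega)]
      norm_num
    have hmm : (Matrix.of fun m u : Fin j => s ((j - 1 + 1 - j) + (m : ℕ) + (u : ℕ)))
        = (Matrix.of fun i k : Fin j => s ((i : ℕ) + (k : ℕ))) := by
      ext m u
      simp only [Matrix.of_apply]
      congr 1
      omega
    rw [hs1, one_mul, hmm]
  · rw [HHaux.hurwitzMinor_eq_detH p l hdeg (2 * j),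
      HHaux.core_det (HHaux.bfun p l) (HHaux.cfun p l) s j j (2 * j)
        (by omega) (by omega) le_rfl (by omega) hbc, hc0]
    have hs2 : ((Equiv.Perm.sign (HHaux.rho (2 * j)) : ℤ) : ℝ) = (-1 : ℝ) ^ j := by
      rw [HHaux.sign_rho]
      rcases Nat.even_or_odd j with h | h
      · rw [if_neg (by have := Nat.even_iff.mp h; omega), h.neg_one_pow]
        norm_num
      · rw [if_pos (by have := Nat.odd_iff.mp h; omega), h.neg_one_pow]
        norm_num
    have hmm : (Matrix.of fun m u : Fin j => s ((j + 1 - j) + (m : ℕ) + (u : ℕ)))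
        = (Matrix.of fun i k : Fin j => s ((i : ℕ) + (k : ℕ) + 1)) := by
      ext m u
      simp only [Matrix.of_apply]
      congr 1
      omega
    rw [hs2, hmm]
end

section
/- Let R = h/g be a real rational function with coprime real polynomials h, g, and define R_0(z^2) = (R(z)+R(-z))/2 and R_1(z^2) = (R(z)-R(-z))/(2z) (the even and odd parts of R). Let P(z) = (-1)^m h(z) g(-z) with even part P_0 and odd part P_1. Then R_1(u)/R_0(u) = P_1(u)/P_0(u) as rational functions in u. -/
open Polynomial Finset

lemma coeff_comp_negX (p : ℝ[X]) (n : ℕ) :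
    (p.comp (-X)).coeff n = (-1) ^ n * p.coeff n := by
  induction p using Polynomial.induction_on' with
  | add p q hp hq => simp [add_comp, hp, hq, mul_add]
  | monomial k a =>
    have hneg : ((-X : ℝ[X])) ^ k = C ((-1 : ℝ) ^ k) * X ^ k := by
      rw [neg_pow, map_pow, map_neg, map_one]
    rw [monomial_comp, hneg, ← mul_assoc, ← C_mul, coeff_C_mul, coeff_X_pow,
      coeff_monomial]
    by_cases hkn : k = n
    · subst hkn; simp [mul_comm]
    · simp [hkn, Ne.symm hkn]

lemma even_part_expand (P0 Q : ℝ[X]) (hP0 : ∀ k, P0.coeff k = Q.coeff (2 * k)) :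
    2 * expand ℝ 2 P0 = Q + Q.comp (-X) := by
  ext n
  rw [coeff_add, coeff_comp_negX, Polynomial.coeff_ofNat_mul,
    coeff_expand (by norm_num : 0 < 2)]
  rcases Nat.even_or_odd n with ⟨k, hk⟩ | ⟨k, hk⟩
  · have h2 : (2 : ℕ) ∣ n := ⟨k, by omega⟩
    rw [if_pos h2]
    have hn : n = 2 * (n / 2) := by omega
    rw [hP0, ← hn, Even.neg_one_pow ⟨k, hk⟩]
    ring
  · have h2 : ¬ (2 : ℕ) ∣ n := by omega
    rw [if_neg h2, hk, Odd.neg_one_pow ⟨k, rfl⟩]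
    ring

lemma odd_part_expand (P1 Q : ℝ[X]) (hP1 : ∀ k, P1.coeff k = Q.coeff (2 * k + 1)) :
    2 * X * expand ℝ 2 P1 = Q - Q.comp (-X) := by
  ext n
  rw [coeff_sub, coeff_comp_negX, mul_assoc, Polynomial.coeff_ofNat_mul]
  match n with
  | 0 => simp
  | (k + 1) =>
    rw [coeff_X_mul, coeff_expand (by norm_num : 0 < 2)]
    rcases Nat.even_or_odd k with ⟨j, hj⟩ | ⟨j, hj⟩
    · have h2 : (2 : ℕ) ∣ k := ⟨j, by omega⟩
      rw [if_pos h2]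
      have hk2 : 2 * (k / 2) + 1 = k + 1 := by omega
      rw [hP1, hk2, Odd.neg_one_pow ⟨k / 2, by omega⟩]
      ring
    · have h2 : ¬ (2 : ℕ) ∣ k := by omega
      rw [if_neg h2, Even.neg_one_pow ⟨j + 1, by omega⟩]
      ring

/-- The associated function of the rational function `R = h/g` coincides with that of
the polynomial `P(z) = (-1)^m h(z) g(-z)`: writing the even and odd parts of `R` as
rational functions `R0 = α/β`, `R1 = γ/δ` (so that `R(z)+R(-z) = 2 R0(z²)` and
`R(z)-R(-z) = 2 z R1(z²)`), and `P0`, `P1` for the even and odd parts of `P`, one has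
`R1/R0 = P1/P0`, i.e. `γ β P0 = α δ P1`. -/
theorem associated_function_eq (h g α β γ δ P0 P1 : Polynomial ℝ) (r m : ℕ)
    (hr : h.natDegree = r) (hm : g.natDegree = m)
    (hcop : IsCoprime h g) (hg : g ≠ 0) (hβ : β ≠ 0) (hδ : δ ≠ 0)
    (hP0 : ∀ k, P0.coeff k
      = (Polynomial.C ((-1 : ℝ) ^ m) * h * g.comp (-Polynomial.X)).coeff (2 * k))
    (hP1 : ∀ k, P1.coeff k
      = (Polynomial.C ((-1 : ℝ) ^ m) * h * g.comp (-Polynomial.X)).coeff (2 * k + 1))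
    (hR0 : (h * g.comp (-Polynomial.X) + h.comp (-Polynomial.X) * g)
        * β.comp (Polynomial.X ^ 2)
      = 2 * α.comp (Polynomial.X ^ 2) * (g * g.comp (-Polynomial.X)))
    (hR1 : (h * g.comp (-Polynomial.X) - h.comp (-Polynomial.X) * g)
        * δ.comp (Polynomial.X ^ 2)
      = 2 * Polynomial.X * γ.comp (Polynomial.X ^ 2) * (g * g.comp (-Polynomial.X))) :
    γ * β * P0 = α * δ * P1 := by
  set Q : ℝ[X] := C ((-1 : ℝ) ^ m) * h * g.comp (-X) with hQ
  have hgg : g.comp (-X) ≠ 0 := by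
    intro hc
    apply hg
    have : (g.comp (-X)).comp (-X) = g := by
      rw [comp_assoc]
      simp
    rw [← this, hc, zero_comp]
  -- Q.comp (-X)
  have hQneg : Q.comp (-X) = C ((-1 : ℝ) ^ m) * h.comp (-X) * g := by
    rw [hQ, mul_comp, mul_comp, C_comp, comp_assoc]
    simp
  have heven := even_part_expand P0 Q hP0
  have hodd := odd_part_expand P1 Q hP1
  rw [hQ, hQneg] at heven hodd
  -- rewrite comp (X^2) as expand
  rw [← expand_eq_comp_X_pow, ← expand_eq_comp_X_pow] at hR0
  rw [← expand_eq_comp_X_pow, ← expand_eq_comp_X_pow] at hR1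
  apply expand_injective (n := 2) (by norm_num)
  have hfac : (4 : ℝ[X]) * X * (g * g.comp (-X)) ≠ 0 := by
    apply mul_ne_zero (mul_ne_zero (by norm_num) X_ne_zero) (mul_ne_zero hg hgg)
  apply mul_right_cancel₀ hfac
  rw [map_mul, map_mul, map_mul, map_mul]
  have hcc : (C ((-1 : ℝ) ^ m) : ℝ[X]) * C ((-1 : ℝ) ^ m) = 1 := by
    rw [← C_mul, ← pow_add]
    simp [pow_mul_comm, ← two_mul, pow_mul]
  set c : ℝ[X] := C ((-1 : ℝ) ^ m)
  set G : ℝ[X] := g * g.comp (-X)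
  set EA := expand ℝ 2 α
  set EB := expand ℝ 2 β
  set EC := expand ℝ 2 γ
  set ED := expand ℝ 2 δ
  set EP0 := expand ℝ 2 P0
  set EP1 := expand ℝ 2 P1
  linear_combination (2 * X * G * EC * EB) * heven + (2 * X * G * EC * c) * hR0
    - (2 * G * EA * ED) * hodd - (2 * G * EA * c) * hR1
end

section
/- The rational function F(z) = (z^2 + z + 1)/(z^2 - z + 1) is Hurwitz (its numerator is Hurwitz stable and its denominator has all roots in the open right half-plane), yet its Laurent expansion at infinity F(z) = Σ t_k z^{-k} has coefficients t_0 = 1, t_{3j-2} = t_{3j-1} = (-1)^{j-1}·2 and t_{3j} = 0 for j ≥ 1, so the coefficients take positive, negative, and zero values. -/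
open Polynomial Finset

lemma hcoeff (n : ℕ) : ((X:ℝ[X])^2 + X + 1).coeff n = if n = 0 then 1 else if n = 1 then 1 else if n = 2 then 1 else 0 := by
  simp [coeff_add, coeff_X_pow, coeff_X, coeff_one]
  rcases n with _|_|_|n <;> norm_num

lemma gcoeff (n : ℕ) : ((X:ℝ[X])^2 - X + 1).coeff n = if n = 0 then 1 else if n = 1 then -1 else if n = 2 then 1 else 0 := by
  simp [coeff_add, coeff_sub, coeff_X_pow, coeff_X, coeff_one]
  rcases n with _|_|_|n <;> norm_num

lemma cFh (k : ℕ) : coeffFrom ((X:ℝ[X])^2 + X + 1) 2 k = if k ≤ 2 then 1 else 0 := by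
  unfold coeffFrom
  rcases k with _|_|_|k <;> simp only [hcoeff] <;> norm_num

lemma cFg (k : ℕ) : coeffFrom ((X:ℝ[X])^2 - X + 1) 2 k =
    if k = 0 then 1 else if k = 1 then -1 else if k = 2 then 1 else 0 := by
  unfold coeffFrom
  rcases k with _|_|_|k <;> simp only [gcoeff]
  · norm_num
  · norm_num
  · norm_num
  · simp [show ¬(k+1+1+1 ≤ 2) from by omega, show ¬(k+1+1+1 = 2) from by omega]

section
variable (t : ℕ → ℝ)
  (ht : IsLaurentSeqOf t ((X:ℝ[X]) ^ 2 + X + 1) ((X:ℝ[X]) ^ 2 - X + 1) 2 2)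
include ht

lemma t0 : t 0 = 1 := by
  have := ht 0
  simpa [cFh, cFg] using this.symm

lemma t1 : t 1 = 2 := by
  have h0 := t0 t ht
  have := ht 1
  rw [Finset.sum_range_succ, Finset.sum_range_succ] at this
  simp [cFh, cFg, h0] at this
  linarith

lemma t2 : t 2 = 2 := by
  have h0 := t0 t ht
  have h1 := t1 t ht
  have := ht 2
  rw [Finset.sum_range_succ, Finset.sum_range_succ, Finset.sum_range_succ] at this
  simp [cFh, cFg, h0, h1] at this
  linarith

lemma trec (k : ℕ) : t (k + 3) = t (k + 2) - t (k + 1) := by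
  have := ht (k + 3)
  rw [Finset.sum_range_succ, Finset.sum_range_succ, Finset.sum_range_succ] at this
  have hz : ∑ i ∈ Finset.range (k + 1), coeffFrom ((X:ℝ[X])^2 - X + 1) 2 (k + 3 - i) * t i = 0 := by
    apply Finset.sum_eq_zero
    intro i hi
    have hik : i ≤ k := Nat.lt_succ_iff.mp (Finset.mem_range.mp hi)
    have h3 : 3 ≤ k + 3 - i := by omega
    rw [cFg]
    have : k + 3 - i ≠ 0 := by omega
    have : k + 3 - i ≠ 1 := by omega
    have : k + 3 - i ≠ 2 := by omega
    simp_all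
  have e1 : k + 3 - (k + 1) = 2 := by omega
  have e2 : k + 3 - (k + 2) = 1 := by omega
  have e3 : k + 3 - (k + 3) = 0 := by omega
  rw [hz, e1, e2, e3, cFh, cFg, cFg, cFg] at this
  rw [if_neg (by omega : ¬ k + 3 ≤ 2)] at this
  norm_num at this
  linarith

lemma tperiod (n : ℕ) : t (3*n+1) = (-1:ℝ)^n * 2 ∧ t (3*n+2) = (-1:ℝ)^n * 2 ∧ t (3*n+3) = 0 := by
  induction n with
  | zero =>
    have h1 := t1 t ht
    have h2 := t2 t ht
    have h3 := trec t ht 0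
    norm_num at h3 ⊢
    exact ⟨h1, h2, by rw [h3, h1, h2]; ring⟩
  | succ n ih =>
    obtain ⟨i1, i2, i3⟩ := ih
    have r1 := trec t ht (3*n+1)
    have r2 := trec t ht (3*n+2)
    have r3 := trec t ht (3*n+3)
    have e1 : 3*(n+1)+1 = 3*n+1+3 := by ring
    have e2 : 3*(n+1)+2 = 3*n+2+3 := by ring
    have e3 : 3*(n+1)+3 = 3*n+3+3 := by ring
    have a1 : t (3*(n+1)+1) = (-1:ℝ)^(n+1) * 2 := by
      rw [e1, r1]
      have : 3*n+1+2 = 3*n+3 := by ring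
      rw [this]
      have : 3*n+1+1 = 3*n+2 := by ring
      rw [this, i3, i2]; ring
    have a2 : t (3*(n+1)+2) = (-1:ℝ)^(n+1) * 2 := by
      rw [e2, r2]
      have h1 : 3*n+2+2 = 3*(n+1)+1 := by ring
      have h2 : 3*n+2+1 = 3*n+3 := by ring
      rw [h1, h2, a1, i3]; ring
    refine ⟨a1, a2, ?_⟩
    rw [e3, r3]
    have h1 : 3*n+3+2 = 3*(n+1)+2 := by ring
    have h2 : 3*n+3+1 = 3*(n+1)+1 := by ring
    rw [h1, h2, a1, a2]; ring
end

lemma root_re (z : ℂ) (h : z^2 + z + 1 = 0) : z.re = -(1/2) := by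
  have him : (z^2 + z + 1).im = 0 := by rw [h]; rfl
  have hre : (z^2 + z + 1).re = 0 := by rw [h]; rfl
  simp [pow_two, Complex.mul_re, Complex.mul_im] at him hre
  rcases mul_eq_zero.mp (show z.im * (2*z.re + 1) = 0 by linarith) with hy | hx
  · exfalso; rw [hy] at hre; nlinarith [sq_nonneg (z.re + 1/2)]
  · linarith

lemma root_re' (z : ℂ) (h : z^2 - z + 1 = 0) : z.re = 1/2 := by
  have him : (z^2 - z + 1).im = 0 := by rw [h]; rfl
  have hre : (z^2 - z + 1).re = 0 := by rw [h]; rfl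
  simp [pow_two, Complex.mul_re, Complex.mul_im] at him hre
  rcases mul_eq_zero.mp (show z.im * (2*z.re - 1) = 0 by linarith) with hy | hx
  · exfalso; rw [hy] at hre; nlinarith [sq_nonneg (z.re - 1/2)]
  · linarith


/-- The function `F(z) = (z²+z+1)/(z²-z+1)` is Hurwitz (its numerator is Hurwitz stable
and all roots of its denominator lie in the open right half-plane), and its Laurent
coefficients at infinity satisfy `t_0 = 1`, `t_{3j-2} = t_{3j-1} = (-1)^{j-1}·2`,
`t_{3j} = 0` for `j ≥ 1`; in particular they take positive, negative and zero values. -/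
theorem example_F (t : ℕ → ℝ)
    (ht : IsLaurentSeqOf t (Polynomial.X ^ 2 + Polynomial.X + 1)
      (Polynomial.X ^ 2 - Polynomial.X + 1) 2 2) :
    HurwitzStable (Polynomial.X ^ 2 + Polynomial.X + 1) ∧
    (∀ z : ℂ, Polynomial.aeval z ((Polynomial.X : Polynomial ℝ) ^ 2 - Polynomial.X + 1) = 0
      → 0 < z.re) ∧
    t 0 = 1 ∧
    (∀ j, 1 ≤ j → t (3 * j - 2) = (-1 : ℝ) ^ (j - 1) * 2
      ∧ t (3 * j - 1) = (-1 : ℝ) ^ (j - 1) * 2 ∧ t (3 * j) = 0) ∧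
    (∃ k, 0 < t k) ∧ (∃ k, t k < 0) ∧ (∃ k, t k = 0) := by
  have h0 := t0 t ht
  have per := tperiod t ht
  obtain ⟨p01, p02, p03⟩ := per 0
  obtain ⟨p11, p12, p13⟩ := per 1
  norm_num at p01 p02 p03 p11 p12 p13
  refine ⟨?_, ?_, h0, ?_, ⟨1, by rw [p01]; norm_num⟩,
    ⟨4, by rw [p11]; norm_num⟩, ⟨3, p03⟩⟩
  · intro z hz
    simp only [map_add, map_pow, map_one, aeval_X] at hz
    rw [root_re z hz]; norm_num
  · intro z hz
    simp only [map_add, map_sub, map_pow, map_one, aeval_X] at hz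
    rw [root_re' z hz]; norm_num
  · intro j hj
    obtain ⟨n, rfl⟩ := Nat.exists_eq_add_of_le hj
    obtain ⟨q1, q2, q3⟩ := per n
    have e1 : 3 * (1 + n) - 2 = 3 * n + 1 := by omega
    have e2 : 3 * (1 + n) - 1 = 3 * n + 2 := by omega
    have e3 : 3 * (1 + n) = 3 * n + 3 := by omega
    have e4 : 1 + n - 1 = n := by omega
    rw [e1, e2, e3, e4]
    exact ⟨q1, q2, q3⟩
end
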